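/- Let A = [[1, (3−√7·i)/2, −2+√7·i],[0, 1, (−3−√7·i)/2],[0, 0, 1]] and B = [[1, (1+√7·i)/2, −1],[(−1+√7·i)/2, −1, 0],[−1, 0, 0]] in M₃(ℂ). Then B³ = 1 and (A⁻¹·B)⁴ = 1. -/
import Mathlib


open Matrix

/-- The normalized parabolic generator A of the even subgroup of Δ(3,4,∞;∞). -/
noncomputable def Amat : Matrix (Fin 3) (Fin 3) ℂ :=
  !![1, (3 - (Real.sqrt 7 : ℂ) * Complex.I) / 2, -2 + (Real.sqrt 7 : ℂ) * Complex.I;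
     0, 1, (-3 - (Real.sqrt 7 : ℂ) * Complex.I) / 2;
     0, 0, 1]

/-- The normalized generator B of the even subgroup of Δ(3,4,∞;∞). -/
noncomputable def Bmat : Matrix (Fin 3) (Fin 3) ℂ :=
  !![1, (1 + (Real.sqrt 7 : ℂ) * Complex.I) / 2, -1;
     (-1 + (Real.sqrt 7 : ℂ) * Complex.I) / 2, -1, 0;
     -1, 0, 0]

noncomputable def AmatInv : Matrix (Fin 3) (Fin 3) ℂ :=
  !![1, -(3 - (Real.sqrt 7 : ℂ) * Complex.I) / 2, -2 - (Real.sqrt 7 : ℂ) * Complex.I;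
     0, 1, (3 + (Real.sqrt 7 : ℂ) * Complex.I) / 2;
     0, 0, 1]

lemma s2 : ((Real.sqrt 7 : ℂ)) ^ 2 = 7 := by
  rw [← Complex.ofReal_pow, Real.sq_sqrt (by norm_num : (7:ℝ) ≥ 0)]; norm_num

lemma Amat_inv : Amat⁻¹ = AmatInv := by
  apply inv_eq_right_inv
  ext i j
  fin_cases i <;> fin_cases j
  all_goals
    try simp [Amat, AmatInv, Matrix.mul_apply, Fin.sum_univ_succ, Matrix.one_apply,
      Matrix.vecHead, Matrix.vecTail]
  all_goals try ring_nf
  all_goals try simp [s2, Complex.I_sq]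
  all_goals try ring_nf

lemma B_sq : Bmat * Bmat =
    !![0, 0, -1;
       0, -1, (1 - (Real.sqrt 7 : ℂ) * Complex.I) / 2;
       -1, (-1 - (Real.sqrt 7 : ℂ) * Complex.I) / 2, 1] := by
  ext i j
  fin_cases i <;> fin_cases j
  all_goals
    try simp [Bmat, Matrix.mul_apply, Fin.sum_univ_succ,
      Matrix.vecHead, Matrix.vecTail]
  all_goals try ring_nf
  all_goals try simp [s2, Complex.I_sq]
  all_goals try ring_nf

lemma AB_eq : AmatInv * Bmat = !![2, 2, -1; -2, -1, 0; -1, 0, 0] := by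
  ext i j
  fin_cases i <;> fin_cases j
  all_goals
    try simp [AmatInv, Bmat, Matrix.mul_apply, Fin.sum_univ_succ,
      Matrix.vecHead, Matrix.vecTail]
  all_goals try ring_nf
  all_goals try simp [s2, Complex.I_sq]
  all_goals try ring_nf

theorem relations_of_even_subgroup_344 :
    Bmat ^ 3 = 1 ∧ (Amat⁻¹ * Bmat) ^ 4 = 1 := by
  constructor
  · rw [pow_succ, pow_two, Matrix.mul_assoc, B_sq]
    ext i j
    fin_cases i <;> fin_cases j
    all_goals
      try simp [Bmat, Matrix.mul_apply, Fin.sum_univ_succ, Matrix.one_apply,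
        Matrix.vecHead, Matrix.vecTail]
    all_goals try ring_nf
    all_goals try simp [s2, Complex.I_sq]
    all_goals try ring_nf
  · rw [Amat_inv, AB_eq, show (4:ℕ) = 2 * 2 from rfl, pow_mul, pow_two, pow_two]
    ext i j
    fin_cases i <;> fin_cases j
    all_goals
      simp [Matrix.mul_apply, Fin.sum_univ_succ, Matrix.one_apply,
        Matrix.vecHead, Matrix.vecTail]
    all_goals norm_num
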